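/- Upper-bound half of Lemma 1: for the (2^{nR1}, 2^{nR2}, n; p) random code ensemble used over the 2-DM-IC, for every n one has H(Y1^n | X1^n, C_n) ≤ n H(Y1 | X1, Q) and H(Y1^n | X1^n, C_n) ≤ n R2 + n H(Y1 | X1, X2, Q), where C_n denotes the random codebook (Q^n together with all codewords), X1^n = X1^n(M1) is the transmitted codeword of sender 1, and Y1^n is the channel output at receiver 1. -/

import Mathlib

/-!
Both bounds single-letterize. Conditioning on less can only increase entropy, so
`H(Y1ⁿ | X1ⁿ, Cₙ) ≤ H(Y1ⁿ | (X1ᵢ, Qᵢ)ᵢ) ≤ ∑ᵢ H(Y1ᵢ | X1ᵢ, Qᵢ)`; for the second bound one first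
reveals `M2`: `H(Y1ⁿ | X1ⁿ, Cₙ) ≤ H(M2 | X1ⁿ, Cₙ) + H(Y1ⁿ | M2, X1ⁿ, Cₙ)`, where the first term is
at most `log₂ |M2| ≤ nR2` and the second is at most `∑ᵢ H(Y1ᵢ | X1ᵢ, X2ᵢ, Qᵢ)`.
Once the messages are fixed, the codewords that are not sent sum out of the ensemble, and the
letters `(Qᵢ, X1ᵢ, X2ᵢ, Y1ᵢ, Y2ᵢ)` are i.i.d. with law `p(q) p(x1|q) p(x2|q) p(y1,y2|x1,x2)`; so
every summand is the single-letter conditional entropy. All entropy inequalities used are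
instances of Gibbs' inequality.
-/

open scoped BigOperators
open Filter

set_option synthInstance.maxSize 4000
set_option synthInstance.maxHeartbeats 1000000
set_option maxHeartbeats 1000000

noncomputable section

/-- Shannon entropy (base 2) of a finitely supported distribution `p`. -/
def ent {α : Type*} [Fintype α] (p : α → ℝ) : ℝ := -∑ a, p a * Real.logb 2 (p a)

/-- The distribution (pushforward) of a random variable `f` on the finite
probability space `(Ω, p)`. -/
def distOf {Ω β : Type*} [Fintype Ω] [DecidableEq β] (p : Ω → ℝ) (f : Ω → β) : β → ℝ :=
  fun b => ∑ ω, if f ω = b then p ω else 0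

/-- The entropy `H(f)` of a random variable `f` on the finite probability space `(Ω, p)`. -/
def entOf {Ω β : Type*} [Fintype Ω] [Fintype β] [DecidableEq β] (p : Ω → ℝ) (f : Ω → β) : ℝ :=
  ent (distOf p f)

/-- The conditional entropy `H(f | g)`. -/
def condEnt {Ω β γ : Type*} [Fintype Ω] [Fintype β] [Fintype γ] [DecidableEq β] [DecidableEq γ]
    (p : Ω → ℝ) (f : Ω → β) (g : Ω → γ) : ℝ :=
  entOf p (fun ω => (f ω, g ω)) - entOf p g

/-- The mutual information `I(f; g)`. -/
def mutInfo {Ω β γ : Type*} [Fintype Ω] [Fintype β] [Fintype γ] [DecidableEq β] [DecidableEq γ]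
    (p : Ω → ℝ) (f : Ω → β) (g : Ω → γ) : ℝ :=
  entOf p f + entOf p g - entOf p (fun ω => (f ω, g ω))

/-- The conditional mutual information `I(f; g | h)`. -/
def condMutInfo {Ω β γ δ : Type*} [Fintype Ω] [Fintype β] [Fintype γ] [Fintype δ]
    [DecidableEq β] [DecidableEq γ] [DecidableEq δ]
    (p : Ω → ℝ) (f : Ω → β) (g : Ω → γ) (h : Ω → δ) : ℝ :=
  entOf p (fun ω => (f ω, h ω)) + entOf p (fun ω => (g ω, h ω)) -
    entOf p (fun ω => (f ω, g ω, h ω)) - entOf p h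

/-- `p` is a probability mass function on the finite alphabet `α`. -/
def IsPMF {α : Type*} [Fintype α] (p : α → ℝ) : Prop := (∀ a, 0 ≤ p a) ∧ ∑ a, p a = 1

/-- The number `2^{nR}` of messages at blocklength `n` and rate `R` (in bits). -/
def msgSize (n : ℕ) (R : ℝ) : ℕ := max 1 ⌊(2 : ℝ) ^ ((n : ℝ) * R)⌋₊

instance (n : ℕ) (R : ℝ) : NeZero (msgSize n R) :=
  ⟨by have h : 1 ≤ msgSize n R := le_max_left _ _; omega⟩

/-- The `ε`-typical set: `xs` is `ε`-typical for the pmf `p` if the empirical frequency of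
every symbol `a` is within `ε · p a` of `p a`. -/
def Typical {α : Type*} [Fintype α] [DecidableEq α] (p : α → ℝ) (ε : ℝ) {n : ℕ}
    (xs : Fin n → α) : Prop :=
  ∀ a, |((Finset.univ.filter fun i => xs i = a).card : ℝ) / (n : ℝ) - p a| ≤ ε * p a


theorem sum_mul_logb_le_sum_mul_logb {α : Type*} [Fintype α] {P R : α → ℝ}
    (hP : ∀ a, 0 ≤ P a) (hR : ∀ a, 0 ≤ R a) (hPR : ∀ a, 0 < P a → 0 < R a)
    (hsum : ∑ a, R a ≤ ∑ a, P a) :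
    ∑ a, P a * Real.logb 2 (R a) ≤ ∑ a, P a * Real.logb 2 (P a) := by
  have hlog2 : 0 < Real.log 2 := Real.log_pos one_lt_two
  have key : ∀ a, P a * Real.logb 2 (R a) - P a * Real.logb 2 (P a) ≤
      (R a - P a) / Real.log 2 := by
    intro a
    rcases (hP a).eq_or_lt with h0 | hpos
    · simpa [← h0] using div_nonneg (hR a) hlog2.le
    · have hRpos := hPR a hpos
      rw [← mul_sub, ← Real.logb_div hRpos.ne' hpos.ne', Real.logb, mul_div_assoc',
        div_le_div_iff_of_pos_right hlog2]
      calc P a * Real.log (R a / P a) ≤ P a * (R a / P a - 1) :=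
            mul_le_mul_of_nonneg_left (Real.log_le_sub_one_of_pos (div_pos hRpos hpos)) hpos.le
        _ = R a - P a := by field_simp
  have hdiff : ∑ a, (P a * Real.logb 2 (R a) - P a * Real.logb 2 (P a)) ≤ 0 :=
    calc _ ≤ ∑ a, (R a - P a) / Real.log 2 := Finset.sum_le_sum fun a _ => key a
      _ = (∑ a, R a - ∑ a, P a) / Real.log 2 := by rw [← Finset.sum_div, Finset.sum_sub_distrib]
      _ ≤ 0 := div_nonpos_of_nonpos_of_nonneg (sub_nonpos.2 hsum) hlog2.le
  rw [Finset.sum_sub_distrib] at hdiff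
  linarith

section Entropy

variable {Ω β γ δ : Type*} [Fintype Ω] [Fintype β] [Fintype γ] [Fintype δ]
  [DecidableEq β] [DecidableEq γ] [DecidableEq δ] {p : Ω → ℝ}

omit [Fintype β] in
theorem distOf_nonneg (hp : ∀ ω, 0 ≤ p ω) (f : Ω → β) (b : β) : 0 ≤ distOf p f b :=
  Finset.sum_nonneg fun ω _ => by split_ifs <;> simp [hp ω]

theorem sum_distOf_mul (f : Ω → β) (g : β → ℝ) :
    ∑ b, distOf p f b * g b = ∑ ω, p ω * g (f ω) := by
  simp only [distOf, Finset.sum_mul, ite_mul, zero_mul]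
  rw [Finset.sum_comm]
  simp

theorem sum_distOf (f : Ω → β) : ∑ b, distOf p f b = ∑ ω, p ω := by
  simpa using sum_distOf_mul (p := p) f fun _ => 1

omit [Fintype γ] in
theorem distOf_comp (f : Ω → β) (φ : β → γ) :
    distOf p (fun ω => φ (f ω)) = distOf (distOf p f) φ := by
  funext c
  have h := sum_distOf_mul (p := p) f fun b => if φ b = c then 1 else 0
  simp only [mul_ite, mul_one, mul_zero] at h
  exact h.symm

omit [Fintype γ] in
theorem sum_distOf_prod_mk (f : Ω → β) (g : Ω → γ) (c : γ) :
    ∑ b, distOf p (fun ω => (f ω, g ω)) (b, c) = distOf p g c := by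
  simp only [distOf, Prod.mk.injEq]
  rw [Finset.sum_comm]
  refine Finset.sum_congr rfl fun ω _ => ?_
  split_ifs with h <;> simp [h]

omit [Fintype β] in
theorem le_distOf_apply (hp : ∀ ω, 0 ≤ p ω) (f : Ω → β) (ω : Ω) : p ω ≤ distOf p f (f ω) := by
  simpa [distOf] using Finset.single_le_sum (f := fun ω' => if f ω' = f ω then p ω' else 0)
    (fun ω' _ => by split_ifs <;> simp [hp ω']) (Finset.mem_univ ω)

omit [Fintype β] [Fintype γ] in
theorem distOf_le_distOf_comp (hp : ∀ ω, 0 ≤ p ω) (f : Ω → β) (φ : β → γ) (b : β) :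
    distOf p f b ≤ distOf p (fun ω => φ (f ω)) (φ b) :=
  Finset.sum_le_sum fun ω _ => by
    by_cases h : f ω = b
    · simp [h]
    · simp only [h, if_false]; split_ifs <;> simp [hp ω]

theorem entOf_eq_neg_sum (f : Ω → β) :
    entOf p f = -∑ ω, p ω * Real.logb 2 (distOf p f (f ω)) := by
  rw [entOf, ent, sum_distOf_mul f fun b => Real.logb 2 (distOf p f b)]

theorem entOf_comp_le (hp : ∀ ω, 0 ≤ p ω) (f : Ω → β) (φ : β → γ) :
    entOf p (fun ω => φ (f ω)) ≤ entOf p f := by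
  rw [entOf_eq_neg_sum, entOf_eq_neg_sum, neg_le_neg_iff]
  refine Finset.sum_le_sum fun ω _ => ?_
  rcases (hp ω).eq_or_lt with h0 | hpos
  · simp [← h0]
  · exact mul_le_mul_of_nonneg_left (Real.logb_le_logb_of_le one_lt_two
      (hpos.trans_le (le_distOf_apply hp f ω)) (distOf_le_distOf_comp hp f φ (f ω))) hpos.le

theorem entOf_eq_of_comp (hp : ∀ ω, 0 ≤ p ω) {f : Ω → β} {g : Ω → γ} (φ : γ → β) (ψ : β → γ)
    (hf : ∀ ω, f ω = φ (g ω)) (hg : ∀ ω, g ω = ψ (f ω)) : entOf p f = entOf p g := by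
  have h1 := entOf_comp_le hp g φ
  have h2 := entOf_comp_le hp f ψ
  simp only [← hf, ← hg] at h1 h2
  exact le_antisymm h1 h2

theorem entOf_submodular (hp : ∀ ω, 0 ≤ p ω) (f : Ω → β) (g : Ω → γ) (h : Ω → δ) :
    entOf p (fun ω => (f ω, g ω, h ω)) + entOf p h ≤
      entOf p (fun ω => (f ω, h ω)) + entOf p (fun ω => (g ω, h ω)) := by
  set T : Ω → β × γ × δ := fun ω => (f ω, g ω, h ω)
  set P := distOf p T
  set A := distOf p (fun ω => (g ω, h ω))
  set B := distOf p (fun ω => (f ω, h ω))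
  set C := distOf p h
  have hPA : ∀ t, P t ≤ A (t.2.1, t.2.2) := distOf_le_distOf_comp hp T fun t => (t.2.1, t.2.2)
  have hPB : ∀ t, P t ≤ B (t.1, t.2.2) := distOf_le_distOf_comp hp T fun t => (t.1, t.2.2)
  have hPC : ∀ t, P t ≤ C t.2.2 := distOf_le_distOf_comp hp T fun t => t.2.2
  -- Gibbs' inequality for `P` against `R = P(g,h) P(f,h) / P(h)`
  set R : β × γ × δ → ℝ := fun t => A (t.2.1, t.2.2) * B (t.1, t.2.2) / C t.2.2
  have hR_sum : ∑ t, R t ≤ ∑ t, P t :=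
    calc ∑ t, R t = ∑ cd : γ × δ, A cd * (∑ b, B (b, cd.2)) / C cd.2 := by
          rw [Fintype.sum_prod_type, Finset.sum_comm]
          simp only [R, Finset.mul_sum, Finset.sum_div]
      _ ≤ ∑ cd, A cd := Finset.sum_le_sum fun cd _ => by
          rw [sum_distOf_prod_mk, mul_div_assoc]
          exact mul_le_of_le_one_right (distOf_nonneg hp _ _) (div_self_le_one _)
      _ = ∑ t, P t := by rw [sum_distOf, sum_distOf]
  have gibbs := sum_mul_logb_le_sum_mul_logb (distOf_nonneg hp T)
    (fun t => div_nonneg (mul_nonneg (distOf_nonneg hp _ _) (distOf_nonneg hp _ _))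
      (distOf_nonneg hp _ _))
    (fun t ht => div_pos (mul_pos (ht.trans_le (hPA t)) (ht.trans_le (hPB t)))
      (ht.trans_le (hPC t))) hR_sum
  rw [sum_distOf_mul T fun t => Real.logb 2 (R t),
    sum_distOf_mul T fun t => Real.logb 2 (P t)] at gibbs
  have hlogR : ∀ ω, p ω * Real.logb 2 (R (T ω)) = p ω * Real.logb 2 (A (g ω, h ω)) +
      p ω * Real.logb 2 (B (f ω, h ω)) - p ω * Real.logb 2 (C (h ω)) := by
    intro ω
    rcases (hp ω).eq_or_lt with h0 | hpos
    · simp [← h0]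
    · have hT := hpos.trans_le (le_distOf_apply hp T ω)
      rw [Real.logb_div (mul_pos (hT.trans_le (hPA _)) (hT.trans_le (hPB _))).ne'
        (hT.trans_le (hPC _)).ne', Real.logb_mul (hT.trans_le (hPA _)).ne'
        (hT.trans_le (hPB _)).ne']
      ring
  simp only [hlogR, Finset.sum_sub_distrib, Finset.sum_add_distrib] at gibbs
  rw [entOf_eq_neg_sum T, entOf_eq_neg_sum h, entOf_eq_neg_sum (fun ω => (f ω, h ω)),
    entOf_eq_neg_sum (fun ω => (g ω, h ω))]
  linarith

theorem condEnt_comp_le (hp : ∀ ω, 0 ≤ p ω) (f : Ω → β) (φ : β → γ) (g : Ω → δ) :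
    condEnt p (fun ω => φ (f ω)) g ≤ condEnt p f g :=
  sub_le_sub_right (entOf_comp_le hp (fun ω => (f ω, g ω)) fun x => (φ x.1, x.2)) _

theorem condEnt_le_condEnt_comp (hp : ∀ ω, 0 ≤ p ω) (f : Ω → β) (g : Ω → γ) (ψ : γ → δ) :
    condEnt p f g ≤ condEnt p f (fun ω => ψ (g ω)) := by
  have h := entOf_submodular hp f g fun ω => ψ (g ω)
  have e1 : entOf p (fun ω => (f ω, g ω, ψ (g ω))) = entOf p (fun ω => (f ω, g ω)) :=
    entOf_eq_of_comp hp (fun x => (x.1, x.2, ψ x.2)) (fun x => (x.1, x.2.1))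
      (fun _ => rfl) (fun _ => rfl)
  have e2 : entOf p (fun ω => (g ω, ψ (g ω))) = entOf p g :=
    entOf_eq_of_comp hp (fun c => (c, ψ c)) Prod.fst (fun _ => rfl) (fun _ => rfl)
  rw [condEnt, condEnt]
  linarith

theorem condEnt_chain_rule (hp : ∀ ω, 0 ≤ p ω) (f : Ω → β) (m : Ω → γ) (g : Ω → δ) :
    condEnt p (fun ω => (f ω, m ω)) g = condEnt p m g + condEnt p f (fun ω => (m ω, g ω)) := by
  have h : entOf p (fun ω => ((f ω, m ω), g ω)) = entOf p (fun ω => (f ω, m ω, g ω)) :=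
    entOf_eq_of_comp hp (fun x => ((x.1, x.2.1), x.2.2)) (fun x => (x.1.1, x.1.2, x.2))
      (fun _ => rfl) (fun _ => rfl)
  rw [condEnt, h, condEnt, condEnt]
  ring

theorem condEnt_le_condEnt_add_condEnt (hp : ∀ ω, 0 ≤ p ω) (f : Ω → β) (m : Ω → γ)
    (g : Ω → δ) : condEnt p f g ≤ condEnt p m g + condEnt p f (fun ω => (m ω, g ω)) :=
  (condEnt_comp_le hp (fun ω => (f ω, m ω)) Prod.fst g).trans (condEnt_chain_rule hp f m g).le

theorem condEnt_le_entOf (hp : ∀ ω, 0 ≤ p ω) (hp1 : ∑ ω, p ω = 1) (f : Ω → β) (g : Ω → γ) :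
    condEnt p f g ≤ entOf p f := by
  have h0 : entOf p (fun _ => ()) = 0 := by simp [entOf, ent, distOf, hp1]
  have h1 : entOf p (fun ω => (f ω, ())) = entOf p f :=
    entOf_eq_of_comp hp (fun b => (b, ())) Prod.fst (fun _ => rfl) (fun _ => rfl)
  simpa [condEnt, h0, h1] using condEnt_le_condEnt_comp hp f g fun _ => ()

theorem entOf_le_logb_card (hp : ∀ ω, 0 ≤ p ω) (hp1 : ∑ ω, p ω = 1) (f : Ω → β) :
    entOf p f ≤ Real.logb 2 (Fintype.card β) := by
  have hP1 : ∑ b, distOf p f b = 1 := by rw [sum_distOf, hp1]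
  have gibbs := sum_mul_logb_le_sum_mul_logb (R := fun _ => (Fintype.card β : ℝ)⁻¹)
    (distOf_nonneg hp f) (fun _ => by positivity)
    (fun b _ => inv_pos.2 (Nat.cast_pos.2 (Fintype.card_pos_iff.2 ⟨b⟩)))
    (by simpa [hP1] using mul_inv_le_one_of_le₀ le_rfl (Nat.cast_nonneg _))
  rw [← Finset.sum_mul, hP1, one_mul, Real.logb_inv] at gibbs
  rw [entOf, ent]
  linarith

theorem condEnt_pi_le_sum (hp : ∀ ω, 0 ≤ p ω) {n : ℕ} (F : Ω → Fin n → β) (g : Ω → γ) :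
    condEnt p F g ≤ ∑ i, condEnt p (fun ω => F ω i) g := by
  induction n with
  | zero =>
    have h : entOf p (fun ω => (F ω, g ω)) = entOf p g :=
      entOf_eq_of_comp hp (fun c => (finZeroElim, c)) Prod.snd
        (fun ω => Prod.ext (Subsingleton.elim _ _) rfl) (fun _ => rfl)
    simp [condEnt, h]
  | succ n ih =>
    have hcons : condEnt p F g = condEnt p (fun ω => (F ω 0, Fin.tail (F ω))) g := by
      rw [condEnt, condEnt, entOf_eq_of_comp (g := fun ω => ((F ω 0, Fin.tail (F ω)), g ω)) hp
        (fun y => (Fin.cons y.1.1 y.1.2, y.2)) (fun x => ((x.1 0, Fin.tail x.1), x.2))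
        (fun ω => by simp) (fun _ => rfl)]
    calc condEnt p F g = condEnt p (fun ω => Fin.tail (F ω)) g +
          condEnt p (fun ω => F ω 0) (fun ω => (Fin.tail (F ω), g ω)) := by
          rw [hcons, condEnt_chain_rule hp]
      _ ≤ ∑ i : Fin n, condEnt p (fun ω => F ω i.succ) g + condEnt p (fun ω => F ω 0) g :=
          add_le_add (ih _) (condEnt_le_condEnt_comp hp _ _ Prod.snd)
      _ = ∑ i, condEnt p (fun ω => F ω i) g := by rw [Fin.sum_univ_succ, add_comm]

theorem condEnt_le_sum_condEnt_apply (hp : ∀ ω, 0 ≤ p ω) {n : ℕ} (F : Ω → Fin n → β)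
    (g : Ω → γ) (G : γ → Fin n → δ) :
    condEnt p F g ≤ ∑ i, condEnt p (fun ω => F ω i) (fun ω => G (g ω) i) :=
  (condEnt_pi_le_sum hp F g).trans
    (Finset.sum_le_sum fun i _ => condEnt_le_condEnt_comp hp _ g fun c => G c i)

theorem condEnt_comp_eq_distOf (T : Ω → δ) (f : δ → β) (g : δ → γ) :
    condEnt p (fun ω => f (T ω)) (fun ω => g (T ω)) = condEnt (distOf p T) f g := by
  rw [condEnt, condEnt, entOf, entOf, distOf_comp T fun t => (f t, g t), distOf_comp T g]
  rfl

end Entropy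

theorem logb_msgSize_le (n : ℕ) {R : ℝ} (hR : 0 ≤ R) : Real.logb 2 (msgSize n R) ≤ n * R := by
  rw [Real.logb_le_iff_le_rpow one_lt_two (Nat.cast_pos.2 (Nat.pos_of_neZero _)), msgSize,
    Nat.cast_max, Nat.cast_one]
  exact max_le (Real.one_le_rpow one_le_two (by positivity)) (Nat.floor_le (by positivity))

section ProductSums

variable {ι κ A : Type*} [Fintype ι] [DecidableEq ι] [Fintype κ] [DecidableEq κ] [Fintype A]

omit [Fintype κ] [DecidableEq κ] in
theorem sum_pi_prod_mul_apply (g : ι → A → ℝ) (i : ι) (hg : ∀ j ≠ i, ∑ a, g j a = 1)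
    (H : A → ℝ) : ∑ f : ι → A, (∏ j, g j (f j)) * H (f i) = ∑ a, g i a * H a := by
  have h : ∀ f : ι → A, (∏ j, g j (f j)) * H (f i) =
      ∏ j, g j (f j) * if j = i then H (f j) else 1 := by
    intro f
    rw [Finset.prod_mul_distrib, Finset.prod_ite_eq']
    simp
  rw [Finset.sum_congr rfl fun f _ => h f]
  refine (Fintype.prod_sum fun j a => g j a * if j = i then H a else 1).symm.trans ?_
  rw [Fintype.prod_eq_single i fun j hj => by simp [hj, hg j hj]]
  simp

theorem sum_pi_pi_prod_mul_apply (g : κ → A → ℝ) (hg : ∀ k, ∑ a, g k a = 1) (i : ι)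
    (H : (κ → A) → ℝ) :
    ∑ c : ι → κ → A, (∏ j, ∏ k, g k (c j k)) * H (c i) = ∑ b : κ → A, (∏ k, g k (b k)) * H b :=
  sum_pi_prod_mul_apply (fun _ b => ∏ k, g k (b k)) i
    (fun _ _ => by rw [← Fintype.prod_sum]; simp [hg]) H

end ProductSums

section TwoUser

variable {Q X1 X2 Y1 Y2 : Type*} [Fintype Q] [DecidableEq Q] [Fintype X1] [DecidableEq X1]
  [Fintype X2] [DecidableEq X2] [Fintype Y1] [DecidableEq Y1] [Fintype Y2] [DecidableEq Y2]

variable (pQ : Q → ℝ) (pX1 : Q → X1 → ℝ) (pX2 : Q → X2 → ℝ) (W : X1 → X2 → Y1 × Y2 → ℝ)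

/-- The single-letter joint distribution of `(Q, X1, X2, Y1, Y2)` induced by the input pmf
`p(q) p(x1|q) p(x2|q)` and the channel `p(y1, y2 | x1, x2)`. -/
def jointP : Q × X1 × X2 × Y1 × Y2 → ℝ := fun z =>
  pQ z.1 * pX1 z.1 z.2.1 * pX2 z.1 z.2.2.1 * W z.2.1 z.2.2.1 (z.2.2.2.1, z.2.2.2.2)

def vQ : Q × X1 × X2 × Y1 × Y2 → Q := fun z => z.1
def vX1 : Q × X1 × X2 × Y1 × Y2 → X1 := fun z => z.2.1
def vX2 : Q × X1 × X2 × Y1 × Y2 → X2 := fun z => z.2.2.1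
def vY1 : Q × X1 × X2 × Y1 × Y2 → Y1 := fun z => z.2.2.2.1
def vY2 : Q × X1 × X2 × Y1 × Y2 → Y2 := fun z => z.2.2.2.2

/-- The rate region `𝓡₁(p)` for receiver 1: either `R1 ≤ I(X1; Y1 | Q)`, or both
`R2 ≤ I(X2; Y1 | X1, Q)` and `R1 + R2 ≤ I(X1, X2; Y1 | Q)`. -/
def Region1 : Set (ℝ × ℝ) :=
  {r | 0 ≤ r.1 ∧ 0 ≤ r.2 ∧
    (r.1 ≤ condMutInfo (jointP pQ pX1 pX2 W) vX1 vY1 vQ ∨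
      (r.2 ≤ condMutInfo (jointP pQ pX1 pX2 W) vX2 vY1 (fun z => (vX1 z, vQ z)) ∧
        r.1 + r.2 ≤ condMutInfo (jointP pQ pX1 pX2 W) (fun z => (vX1 z, vX2 z)) vY1 vQ))}

/-- The rate region `𝓡₂(p)` for receiver 2, obtained from `𝓡₁(p)` by exchanging
the roles of the two users. -/
def Region2 : Set (ℝ × ℝ) :=
  {r | 0 ≤ r.1 ∧ 0 ≤ r.2 ∧
    (r.2 ≤ condMutInfo (jointP pQ pX1 pX2 W) vX2 vY2 vQ ∨
      (r.1 ≤ condMutInfo (jointP pQ pX1 pX2 W) vX1 vY2 (fun z => (vX2 z, vQ z)) ∧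
        r.1 + r.2 ≤ condMutInfo (jointP pQ pX1 pX2 W) (fun z => (vX1 z, vX2 z)) vY2 vQ))}

/-- A codebook for the two-user interference channel: a time-sharing sequence together with
a codeword for each message of each sender. -/
abbrev Codebook (Q X1 X2 : Type*) (n M1 M2 : ℕ) : Type _ :=
  (Fin n → Q) × (Fin M1 → Fin n → X1) × (Fin M2 → Fin n → X2)

/-- The probability of a codebook under the `p`-distributed random code ensemble. -/
def ensembleP {n M1 M2 : ℕ} (c : Codebook Q X1 X2 n M1 M2) : ℝ :=
  (∏ i, pQ (c.1 i)) * (∏ m1, ∏ i, pX1 (c.1 i) (c.2.1 m1 i)) *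
    (∏ m2, ∏ i, pX2 (c.1 i) (c.2.2 m2 i))

/-- The average probability of error of the code given by codebook `c` and decoders
`d1`, `d2` (messages are uniform, the channel is memoryless). -/
def PeCode {n M1 M2 : ℕ} (c : Codebook Q X1 X2 n M1 M2)
    (d1 : (Fin n → Y1) → Fin M1) (d2 : (Fin n → Y2) → Fin M2) : ℝ :=
  ((M1 : ℝ) * (M2 : ℝ))⁻¹ * ∑ m1, ∑ m2, ∑ y1 : Fin n → Y1, ∑ y2 : Fin n → Y2,
    (∏ i, W (c.2.1 m1 i) (c.2.2 m2 i) (y1 i, y2 i)) *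
      (if d1 y1 = m1 ∧ d2 y2 = m2 then 0 else 1)

/-- The probability of error of the codebook `c` under optimal (maximum likelihood)
decoding, i.e. the least error probability over all decoder pairs. -/
def PeOpt {n M1 M2 : ℕ} (c : Codebook Q X1 X2 n M1 M2) : ℝ :=
  ⨅ d : ((Fin n → Y1) → Fin M1) × ((Fin n → Y2) → Fin M2), PeCode W c d.1 d.2

/-- The probability of error under optimal decoding at blocklength `n` and rates `(R1, R2)`,
averaged over the random code ensemble. -/
def avgPeOpt (R1 R2 : ℝ) (n : ℕ) : ℝ :=
  ∑ c : Codebook Q X1 X2 n (msgSize n R1) (msgSize n R2),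
    ensembleP pQ pX1 pX2 c * PeOpt W c

/-- The sample space of the full communication experiment: a random codebook, a uniform
message pair, and the channel output sequences. -/
abbrev ExpSpace (Q X1 X2 Y1 Y2 : Type*) (n M1 M2 : ℕ) : Type _ :=
  Codebook Q X1 X2 n M1 M2 × Fin M1 × Fin M2 × (Fin n → Y1) × (Fin n → Y2)

/-- The joint distribution of the communication experiment: the codebook is drawn from the
random code ensemble, the messages `(M1, M2)` are independent and uniform, and the output
sequences are produced by the memoryless channel from the transmitted codewords. -/
def expP {n M1 M2 : ℕ} : ExpSpace Q X1 X2 Y1 Y2 n M1 M2 → ℝ := fun ω =>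
  ensembleP pQ pX1 pX2 ω.1 * ((M1 : ℝ) * (M2 : ℝ))⁻¹ *
    ∏ i, W (ω.1.2.1 ω.2.1 i) (ω.1.2.2 ω.2.2.1 i) (ω.2.2.2.1 i, ω.2.2.2.2 i)


section

omit [DecidableEq Q] [DecidableEq X1] [DecidableEq X2] [DecidableEq Y1] [DecidableEq Y2]

-- `(Qᵢ, X1ᵢ(M1), X2ᵢ(M2), Y1ᵢ, Y2ᵢ)`: the `i`-th letters of the time-sharing sequence, of the
-- two transmitted codewords and of the two outputs
def expLetter {n M1 M2 : ℕ} (i : Fin n) (ω : ExpSpace Q X1 X2 Y1 Y2 n M1 M2) :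
    Q × X1 × X2 × Y1 × Y2 :=
  (ω.1.1 i, ω.1.2.1 ω.2.1 i, ω.1.2.2 ω.2.2.1 i, ω.2.2.2.1 i, ω.2.2.2.2 i)

theorem sum_jointP (hpQ : ∑ q, pQ q = 1) (hpX1 : ∀ q, ∑ x, pX1 q x = 1)
    (hpX2 : ∀ q, ∑ x, pX2 q x = 1) (hW : ∀ x1 x2, ∑ y, W x1 x2 y = 1) :
    ∑ z, jointP pQ pX1 pX2 W z = 1 := by
  simp only [Fintype.sum_prod_type] at hW
  simp [jointP, Fintype.sum_prod_type, ← Finset.mul_sum, hW, hpX2, hpX1, hpQ]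

omit [Fintype Q] [Fintype X1] [Fintype X2] [Fintype Y1] [Fintype Y2] in
theorem expP_nonneg {n M1 M2 : ℕ} (hpQ : ∀ q, 0 ≤ pQ q) (hpX1 : ∀ q x, 0 ≤ pX1 q x)
    (hpX2 : ∀ q x, 0 ≤ pX2 q x) (hW : ∀ x1 x2 y, 0 ≤ W x1 x2 y)
    (ω : ExpSpace Q X1 X2 Y1 Y2 n M1 M2) : 0 ≤ expP pQ pX1 pX2 W ω := by
  unfold expP ensembleP
  have := Finset.prod_nonneg fun i (_ : i ∈ Finset.univ) => hpQ (ω.1.1 i)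
  have := Finset.prod_nonneg fun m (_ : m ∈ Finset.univ) =>
    Finset.prod_nonneg fun i (_ : i ∈ Finset.univ) => hpX1 (ω.1.1 i) (ω.1.2.1 m i)
  have := Finset.prod_nonneg fun m (_ : m ∈ Finset.univ) =>
    Finset.prod_nonneg fun i (_ : i ∈ Finset.univ) => hpX2 (ω.1.1 i) (ω.1.2.2 m i)
  have := Finset.prod_nonneg fun i (_ : i ∈ Finset.univ) =>
    hW (ω.1.2.1 ω.2.1 i) (ω.1.2.2 ω.2.2.1 i) (ω.2.2.2.1 i, ω.2.2.2.2 i)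
  positivity

theorem sum_codebook_output_mul_prod {n M1 M2 : ℕ} (hpX1 : ∀ q, ∑ x, pX1 q x = 1)
    (hpX2 : ∀ q, ∑ x, pX2 q x = 1) (m1 : Fin M1) (m2 : Fin M2)
    (φ : Fin n → Q × X1 × X2 × Y1 × Y2 → ℝ) :
    ∑ qn : Fin n → Q, ∑ c1 : Fin M1 → Fin n → X1, ∑ c2 : Fin M2 → Fin n → X2,
      ensembleP pQ pX1 pX2 (qn, c1, c2) * ∑ y1 : Fin n → Y1, ∑ y2 : Fin n → Y2,
        (∏ i, W (c1 m1 i) (c2 m2 i) (y1 i, y2 i)) *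
          ∏ i, φ i (qn i, c1 m1 i, c2 m2 i, y1 i, y2 i) =
    ∏ i, ∑ z, jointP pQ pX1 pX2 W z * φ i z := by
  set F : (Fin n → Q) → (Fin n → X1) → (Fin n → X2) → ℝ := fun qn a b =>
    ∑ y1 : Fin n → Y1, ∑ y2 : Fin n → Y2,
      (∏ i, W (a i) (b i) (y1 i, y2 i)) * ∏ i, φ i (qn i, a i, b i, y1 i, y2 i)
  calc _ = ∑ qn : Fin n → Q, (∏ i, pQ (qn i)) *
          ∑ c1 : Fin M1 → Fin n → X1, (∏ m, ∏ i, pX1 (qn i) (c1 m i)) *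
            ∑ c2 : Fin M2 → Fin n → X2, (∏ m, ∏ i, pX2 (qn i) (c2 m i)) *
              F qn (c1 m1) (c2 m2) := by
        simp only [ensembleP, F, Finset.mul_sum, mul_assoc]
    _ = ∑ qn : Fin n → Q, (∏ i, pQ (qn i)) *
          ∑ a : Fin n → X1, (∏ i, pX1 (qn i) (a i)) *
            ∑ b : Fin n → X2, (∏ i, pX2 (qn i) (b i)) * F qn a b := by
        refine Finset.sum_congr rfl fun qn _ => congrArg _ ?_
        rw [sum_pi_pi_prod_mul_apply (fun i x => pX1 (qn i) x) (fun i => hpX1 (qn i)) m1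
          fun a => ∑ c2 : Fin M2 → Fin n → X2, (∏ m, ∏ i, pX2 (qn i) (c2 m i)) * F qn a (c2 m2)]
        refine Finset.sum_congr rfl fun a _ => congrArg _ ?_
        exact sum_pi_pi_prod_mul_apply (fun i x => pX2 (qn i) x) (fun i => hpX2 (qn i)) m2
          fun b => F qn a b
    _ = ∑ qn : Fin n → Q, ∑ a : Fin n → X1, ∑ b : Fin n → X2,
          ∑ y1 : Fin n → Y1, ∑ y2 : Fin n → Y2,
            ∏ i, jointP pQ pX1 pX2 W (qn i, a i, b i, y1 i, y2 i) *
              φ i (qn i, a i, b i, y1 i, y2 i) := by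
        simp only [F, jointP, Finset.mul_sum, ← Finset.prod_mul_distrib, mul_assoc]
    _ = ∏ i, ∑ z, jointP pQ pX1 pX2 W z * φ i z := by
        simp only [Fintype.sum_prod_type, Fintype.prod_sum]

theorem sum_expP_mul_prod {n M1 M2 : ℕ} [NeZero M1] [NeZero M2]
    (hpX1 : ∀ q, ∑ x, pX1 q x = 1) (hpX2 : ∀ q, ∑ x, pX2 q x = 1)
    (φ : Fin n → Q × X1 × X2 × Y1 × Y2 → ℝ) :
    ∑ ω : ExpSpace Q X1 X2 Y1 Y2 n M1 M2, expP pQ pX1 pX2 W ω * ∏ i, φ i (expLetter i ω) =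
      ∏ i, ∑ z, jointP pQ pX1 pX2 W z * φ i z := by
  let e : (Fin M1 × Fin M2) × Codebook Q X1 X2 n M1 M2 × (Fin n → Y1) × (Fin n → Y2) ≃
      ExpSpace Q X1 X2 Y1 Y2 n M1 M2 :=
    ⟨fun t => (t.2.1, t.1.1, t.1.2, t.2.2.1, t.2.2.2),
      fun ω => ((ω.2.1, ω.2.2.1), ω.1, ω.2.2.2.1, ω.2.2.2.2), fun _ => rfl, fun _ => rfl⟩
  have hexpP : ∀ ω : ExpSpace Q X1 X2 Y1 Y2 n M1 M2, expP pQ pX1 pX2 W ω =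
      ((M1 : ℝ) * M2)⁻¹ * (ensembleP pQ pX1 pX2 ω.1 *
        ∏ i, W (ω.1.2.1 ω.2.1 i) (ω.1.2.2 ω.2.2.1 i) (ω.2.2.2.1 i, ω.2.2.2.2 i)) :=
    fun ω => by rw [expP]; ring
  rw [← e.sum_comp]
  simp only [Fintype.sum_prod_type, e, Equiv.coe_fn_mk, expLetter, hexpP, mul_assoc,
    ← Finset.mul_sum, sum_codebook_output_mul_prod pQ pX1 pX2 W hpX1 hpX2]
  have hM1 : (M1 : ℝ) ≠ 0 := Nat.cast_ne_zero.2 (NeZero.ne M1)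
  have hM2 : (M2 : ℝ) ≠ 0 := Nat.cast_ne_zero.2 (NeZero.ne M2)
  simp only [Finset.sum_const, Finset.card_univ, Fintype.card_fin, nsmul_eq_mul]
  field_simp

theorem sum_expP {n M1 M2 : ℕ} [NeZero M1] [NeZero M2] (hpQ : ∑ q, pQ q = 1)
    (hpX1 : ∀ q, ∑ x, pX1 q x = 1) (hpX2 : ∀ q, ∑ x, pX2 q x = 1)
    (hW : ∀ x1 x2, ∑ y, W x1 x2 y = 1) :
    ∑ ω : ExpSpace Q X1 X2 Y1 Y2 n M1 M2, expP pQ pX1 pX2 W ω = 1 := by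
  simpa [sum_jointP pQ pX1 pX2 W hpQ hpX1 hpX2 hW] using
    sum_expP_mul_prod pQ pX1 pX2 W (n := n) (M1 := M1) (M2 := M2) hpX1 hpX2 fun _ _ => 1

end

theorem distOf_expLetter {n M1 M2 : ℕ} [NeZero M1] [NeZero M2] (hpQ : ∑ q, pQ q = 1)
    (hpX1 : ∀ q, ∑ x, pX1 q x = 1) (hpX2 : ∀ q, ∑ x, pX2 q x = 1)
    (hW : ∀ x1 x2, ∑ y, W x1 x2 y = 1) (i : Fin n) :
    distOf (expP pQ pX1 pX2 W (M1 := M1) (M2 := M2)) (expLetter i) = jointP pQ pX1 pX2 W := by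
  funext z
  have h := sum_expP_mul_prod pQ pX1 pX2 W (M1 := M1) (M2 := M2) hpX1 hpX2
    fun j z' => if j = i then (if z' = z then 1 else 0) else 1
  simpa [distOf, apply_ite, mul_ite, sum_jointP pQ pX1 pX2 W hpQ hpX1 hpX2 hW,
    Finset.prod_ite_eq'] using h

theorem sum_condEnt_expLetter {β γ : Type*} [Fintype β] [DecidableEq β] [Fintype γ]
    [DecidableEq γ] {n M1 M2 : ℕ} [NeZero M1] [NeZero M2] (hpQ : ∑ q, pQ q = 1)
    (hpX1 : ∀ q, ∑ x, pX1 q x = 1) (hpX2 : ∀ q, ∑ x, pX2 q x = 1)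
    (hW : ∀ x1 x2, ∑ y, W x1 x2 y = 1) (f : Q × X1 × X2 × Y1 × Y2 → β)
    (g : Q × X1 × X2 × Y1 × Y2 → γ) :
    ∑ i : Fin n, condEnt (expP pQ pX1 pX2 W (M1 := M1) (M2 := M2)) (fun ω => f (expLetter i ω))
      (fun ω => g (expLetter i ω)) = n * condEnt (jointP pQ pX1 pX2 W) f g := by
  simp [condEnt_comp_eq_distOf, distOf_expLetter pQ pX1 pX2 W hpQ hpX1 hpX2 hW]

theorem conditional_output_entropy_upper_bounds
    (hpQ : IsPMF pQ) (hpX1 : ∀ q, IsPMF (pX1 q)) (hpX2 : ∀ q, IsPMF (pX2 q))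
    (hW : ∀ x1 x2, IsPMF (W x1 x2)) (R1 R2 : ℝ) (hR2 : 0 ≤ R2) (n : ℕ) :
    condEnt (expP pQ pX1 pX2 W (n := n) (M1 := msgSize n R1) (M2 := msgSize n R2))
        (fun ω => ω.2.2.2.1) (fun ω => (ω.1.2.1 ω.2.1, ω.1)) ≤
      (n : ℝ) * condEnt (jointP pQ pX1 pX2 W) vY1 (fun z => (vX1 z, vQ z)) ∧
    condEnt (expP pQ pX1 pX2 W (n := n) (M1 := msgSize n R1) (M2 := msgSize n R2))
        (fun ω => ω.2.2.2.1) (fun ω => (ω.1.2.1 ω.2.1, ω.1)) ≤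
      (n : ℝ) * R2 + (n : ℝ) * condEnt (jointP pQ pX1 pX2 W) vY1
        (fun z => (vX1 z, vX2 z, vQ z)) := by
  set p := expP pQ pX1 pX2 W (n := n) (M1 := msgSize n R1) (M2 := msgSize n R2)
  obtain ⟨hpQ0, hpQ1⟩ := hpQ
  choose hpX10 hpX11 using hpX1
  choose hpX20 hpX21 using hpX2
  choose hW0 hW1 using hW
  have hp : ∀ ω, 0 ≤ p ω := expP_nonneg pQ pX1 pX2 W hpQ0 hpX10 hpX20 hW0
  have hp1 : ∑ ω, p ω = 1 := sum_expP pQ pX1 pX2 W hpQ1 hpX11 hpX21 hW1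
  have hM2 : condEnt p (fun ω => ω.2.2.1) (fun ω => (ω.1.2.1 ω.2.1, ω.1)) ≤ n * R2 :=
    calc _ ≤ Real.logb 2 (Fintype.card (Fin (msgSize n R2))) :=
          (condEnt_le_entOf hp hp1 _ _).trans (entOf_le_logb_card hp hp1 _)
      _ ≤ n * R2 := by simpa using logb_msgSize_le n hR2
  constructor
  -- `(X1ⁿ, Cₙ)` determines `(X1ᵢ, Qᵢ)`, and `(M2, X1ⁿ, Cₙ)` determines `(X1ᵢ, X2ᵢ(M2), Qᵢ)`
  · refine (condEnt_le_sum_condEnt_apply hp _ _ fun c i => (c.1 i, c.2.1 i)).trans (le_of_eq ?_)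
    exact sum_condEnt_expLetter pQ pX1 pX2 W hpQ1 hpX11 hpX21 hW1 vY1 fun z => (vX1 z, vQ z)
  · refine (condEnt_le_condEnt_add_condEnt hp _ (fun ω => ω.2.2.1) _).trans (add_le_add hM2 ?_)
    refine (condEnt_le_sum_condEnt_apply hp _ _
      fun c i => (c.2.1 i, c.2.2.2.2 c.1 i, c.2.2.1 i)).trans (le_of_eq ?_)
    exact sum_condEnt_expLetter pQ pX1 pX2 W hpQ1 hpX11 hpX21 hW1 vY1
      fun z => (vX1 z, vX2 z, vQ z)

end TwoUser
end
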